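/- Let S² be the unit sphere in ℝ³, let T_{γ₁} be the rotation of S² about the z-axis by angle 2πγ₁, and let R_{γ₂} be the rotation of S² about the x-axis by angle 2πγ₂, where γ₁ and γ₂ are irrational. Then the IFS(S²; T_{γ₁}, R_{γ₂}) is minimal: every nonempty closed subset C ⊆ S² with T_{γ₁}(C) ⊆ C and R_{γ₂}(C) ⊆ C equals S². The same conclusion holds for the inverse family {T_{γ₁}⁻¹, R_{γ₂}⁻¹}. -/

import Mathlib

/-!
Since `γ` is irrational, the forward multiples of `2πγ` are dense modulo `2π` (multiples of an
irrational element are dense in the circle, and in a compact group forward multiples already have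
the same closure). Hence a closed set invariant under the rotation by `2πγ` about an axis is
invariant under every rotation about that axis. Every point of `S²` is `rotZ a (rotX b N)` for
the north pole `N` and suitable Euler angles `a, b`, so any two points of `S²` are related by a
rotation `rotZ ∘ rotX ∘ rotZ`, and one point of an invariant closed set reaches all of `S²`.
-/

open Metric MeasureTheory Set

/-- Rotation of `ℝ³` about the `z`-axis by angle `θ`. -/
noncomputable def rotZ (θ : ℝ) (v : EuclideanSpace ℝ (Fin 3)) : EuclideanSpace ℝ (Fin 3) :=
  WithLp.toLp 2 ![v 0 * Real.cos θ - v 1 * Real.sin θ, v 0 * Real.sin θ + v 1 * Real.cos θ, v 2]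

/-- Rotation of `ℝ³` about the `x`-axis by angle `θ`. -/
noncomputable def rotX (θ : ℝ) (v : EuclideanSpace ℝ (Fin 3)) : EuclideanSpace ℝ (Fin 3) :=
  WithLp.toLp 2 ![v 0, v 1 * Real.cos θ - v 2 * Real.sin θ, v 1 * Real.sin θ + v 2 * Real.cos θ]

open Function Real

theorem Function.Periodic.range_subset_of_irrational {X : Type*} [TopologicalSpace X]
    {g : ℝ → X} {p a : ℝ} (hg : Periodic g p) (hp : 0 < p) (hcont : Continuous g)
    (ha : Irrational (a / p)) {C : Set X} (hC : IsClosed C) (h : ∀ n : ℕ, g (n * a) ∈ C) :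
    range g ⊆ C := by
  have : Fact (0 < p) := ⟨hp⟩
  have hdense : DenseRange (· • (a : AddCircle p) : ℕ → AddCircle p) :=
    denseRange_zsmul_iff_nsmul.1 (AddCircle.denseRange_zsmul_coe_iff.2 ha)
  rintro _ ⟨x, rfl⟩
  refine hdense.induction_on (p := (hg.lift · ∈ C)) (x : AddCircle p)
    (hC.preimage (continuous_quot_lift _ hcont)) fun n => ?_
  show hg.lift ((n • a : ℝ) : AddCircle p) ∈ C
  rw [hg.lift_coe, nsmul_eq_mul]
  exact h n

theorem mapsTo_of_mapsTo_irrational {X : Type*} [TopologicalSpace X] {R : ℝ → X → X}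
    {p a : ℝ} (hzero : ∀ x, R 0 x = x) (hadd : ∀ s t x, R (s + t) x = R s (R t x))
    (hper : ∀ x, Periodic (R · x) p) (hcont : ∀ x, Continuous (R · x)) (hp : 0 < p)
    (ha : Irrational (a / p)) {C : Set X} (hC : IsClosed C) (hCa : MapsTo (R a) C C) (θ : ℝ) :
    MapsTo (R θ) C C := by
  intro x hx
  have hiterate (n : ℕ) : R (n * a) x = (R a)^[n] x := by
    induction n with
    | zero => simp [hzero]
    | succ n ih => rw [iterate_succ_apply', ← ih, ← hadd, Nat.cast_succ, add_one_mul, add_comm]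
  exact (hper x).range_subset_of_irrational hp (hcont x) ha hC
    (fun n => hiterate n ▸ hCa.iterate n hx) ⟨θ, rfl⟩

theorem rotZ_zero (v : EuclideanSpace ℝ (Fin 3)) : rotZ 0 v = v := by
  ext i; fin_cases i <;> simp [rotZ]

theorem rotZ_add (s t : ℝ) (v : EuclideanSpace ℝ (Fin 3)) :
    rotZ (s + t) v = rotZ s (rotZ t v) := by
  ext i; fin_cases i <;> simp [rotZ, cos_add, sin_add] <;> ring

theorem rotZ_periodic (v : EuclideanSpace ℝ (Fin 3)) : Periodic (rotZ · v) (2 * π) := by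
  intro θ; simp [rotZ]

theorem continuous_rotZ (v : EuclideanSpace ℝ (Fin 3)) : Continuous (rotZ · v) := by
  unfold rotZ; fun_prop

theorem rotX_zero (v : EuclideanSpace ℝ (Fin 3)) : rotX 0 v = v := by
  ext i; fin_cases i <;> simp [rotX]

theorem rotX_add (s t : ℝ) (v : EuclideanSpace ℝ (Fin 3)) :
    rotX (s + t) v = rotX s (rotX t v) := by
  ext i; fin_cases i <;> simp [rotX, cos_add, sin_add] <;> ring

theorem rotX_periodic (v : EuclideanSpace ℝ (Fin 3)) : Periodic (rotX · v) (2 * π) := by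
  intro θ; simp [rotX]

theorem continuous_rotX (v : EuclideanSpace ℝ (Fin 3)) : Continuous (rotX · v) := by
  unfold rotX; fun_prop

theorem sum_sq_eq_one_of_mem_sphere {v : EuclideanSpace ℝ (Fin 3)} (hv : v ∈ sphere 0 1) :
    v 0 ^ 2 + v 1 ^ 2 + v 2 ^ 2 = 1 := by
  have := EuclideanSpace.norm_sq_eq v
  rw [mem_sphere_zero_iff_norm.1 hv, Fin.sum_univ_three] at this
  simpa using this.symm

theorem exists_rotZ_rotX_north_pole_eq {v : EuclideanSpace ℝ (Fin 3)} (hv : v ∈ sphere 0 1) :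
    ∃ a b, rotZ a (rotX b !₂[0, 0, 1]) = v := by
  have hsum := sum_sq_eq_one_of_mem_sphere hv
  -- `rotZ a (rotX b N) = (sin b sin a, -sin b cos a, cos b)`, so `a` is the argument of `z`.
  set z : ℂ := ⟨-v 1, v 0⟩
  have hsin : sin (arccos (v 2)) = ‖z‖ := by
    rw [sin_arccos, Complex.norm_eq_sqrt_sq_add_sq]
    congr 1
    simp only [z]
    linarith
  have hcos : cos (arccos (v 2)) = v 2 := cos_arccos (by nlinarith) (by nlinarith)
  refine ⟨Complex.arg z, arccos (v 2), ?_⟩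
  ext i
  fin_cases i
  · simp [rotZ, rotX, hsin, Complex.norm_mul_sin_arg, z]
  · simp [rotZ, rotX, hsin, Complex.norm_mul_cos_arg, z]
  · simp [rotZ, rotX, hcos]

theorem exists_rotZ_rotX_rotZ_eq {v w : EuclideanSpace ℝ (Fin 3)} (hv : v ∈ sphere 0 1)
    (hw : w ∈ sphere 0 1) : ∃ a b c, rotZ a (rotX b (rotZ c v)) = w := by
  obtain ⟨a, b, rfl⟩ := exists_rotZ_rotX_north_pole_eq hv
  obtain ⟨a', b', rfl⟩ := exists_rotZ_rotX_north_pole_eq hw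
  refine ⟨a', b' - b, -a, ?_⟩
  rw [← rotZ_add, neg_add_cancel, rotZ_zero, ← rotX_add, sub_add_cancel]

theorem eq_sphere_of_mapsTo_rotZ_rotX {γ₁ γ₂ : ℝ} (h₁ : Irrational γ₁) (h₂ : Irrational γ₂)
    {C : Set (EuclideanSpace ℝ (Fin 3))} (hne : C.Nonempty) (hC : IsClosed C)
    (hsub : C ⊆ sphere 0 1) (hZ : MapsTo (rotZ (2 * π * γ₁)) C C)
    (hX : MapsTo (rotX (2 * π * γ₂)) C C) : C = sphere 0 1 := by
  have hZ' := mapsTo_of_mapsTo_irrational rotZ_zero rotZ_add rotZ_periodic continuous_rotZ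
    two_pi_pos (by rwa [mul_div_cancel_left₀ _ two_pi_pos.ne']) hC hZ
  have hX' := mapsTo_of_mapsTo_irrational rotX_zero rotX_add rotX_periodic continuous_rotX
    two_pi_pos (by rwa [mul_div_cancel_left₀ _ two_pi_pos.ne']) hC hX
  refine hsub.antisymm fun w hw => ?_
  obtain ⟨v, hv⟩ := hne
  obtain ⟨a, b, c, rfl⟩ := exists_rotZ_rotX_rotZ_eq (hsub hv) hw
  exact hZ' a (hX' b (hZ' c hv))

/-- The IFS on the unit sphere `S² ⊆ ℝ³` generated by the rotation about the `z`-axis by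
angle `2πγ₁` and the rotation about the `x`-axis by angle `2πγ₂`, with `γ₁, γ₂`
irrational, is minimal; and so is the IFS generated by the inverse rotations. -/
theorem sphere_rotations_minimal
    (γ₁ γ₂ : ℝ) (h₁ : Irrational γ₁) (h₂ : Irrational γ₂) :
    (∀ C : Set (EuclideanSpace ℝ (Fin 3)), C.Nonempty → IsClosed C →
      C ⊆ Metric.sphere 0 1 →
      rotZ (2 * Real.pi * γ₁) '' C ⊆ C → rotX (2 * Real.pi * γ₂) '' C ⊆ C →
      C = Metric.sphere 0 1) ∧
    (∀ C : Set (EuclideanSpace ℝ (Fin 3)), C.Nonempty → IsClosed C →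
      C ⊆ Metric.sphere 0 1 →
      rotZ (-(2 * Real.pi * γ₁)) '' C ⊆ C → rotX (-(2 * Real.pi * γ₂)) '' C ⊆ C →
      C = Metric.sphere 0 1) := by
  refine ⟨fun C hne hC hsub hZ hX => ?_, fun C hne hC hsub hZ hX => ?_⟩
  · exact eq_sphere_of_mapsTo_rotZ_rotX h₁ h₂ hne hC hsub (mapsTo_iff_image_subset.2 hZ)
      (mapsTo_iff_image_subset.2 hX)
  · rw [← mul_neg] at hZ hX
    exact eq_sphere_of_mapsTo_rotZ_rotX h₁.neg h₂.neg hne hC hsub (mapsTo_iff_image_subset.2 hZ)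
      (mapsTo_iff_image_subset.2 hX)
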